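/- The function J̃ : ℝ → ℝ defined by J̃(v) = (1/4)v² + (1/2)(1 − sgn(v)v²)² has a unique global minimizer at v = √3/2; that is, J̃(√3/2) ≤ J̃(v) for all v ∈ ℝ, with equality only when v = √3/2. -/

import Mathlib

/-! On `v ≥ 0` we have `J̃(v) = (v² - 3/4)²/2 + 7/32`, minimal exactly where `v² = 3/4`; on `v < 0`
the sign flips the second term to `(1 + v²)²/2 ≥ 1/2 > 7/32`. -/

/-- Transformed scalar objective `J̃(v) = (1/4)v² + (1/2)(1 - sgn(v)v²)²`. -/
noncomputable def Jt (v : ℝ) : ℝ :=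
  1 / 4 * v ^ 2 + 1 / 2 * (1 - Real.sign v * v ^ 2) ^ 2

lemma Jt_of_nonneg {v : ℝ} (hv : 0 ≤ v) : Jt v = 1 / 2 * (v ^ 2 - 3 / 4) ^ 2 + 7 / 32 := by
  rcases hv.eq_or_lt with rfl | hpos
  · norm_num [Jt]
  · rw [Jt, Real.sign_of_pos hpos]
    ring

lemma half_le_Jt_of_neg {v : ℝ} (hv : v < 0) : 1 / 2 ≤ Jt v := by
  rw [Jt, Real.sign_of_neg hv]
  nlinarith [sq_nonneg v]

lemma sq_sqrt_three_div_two : (Real.sqrt 3 / 2) ^ 2 = 3 / 4 := by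
  rw [div_pow, Real.sq_sqrt (by norm_num : (0 : ℝ) ≤ 3)]
  norm_num

lemma Jt_sqrt_three_div_two : Jt (Real.sqrt 3 / 2) = 7 / 32 := by
  rw [Jt_of_nonneg (by positivity), sq_sqrt_three_div_two]
  norm_num

lemma Jt_sqrt_three_div_two_lt {v : ℝ} (hv : v ≠ Real.sqrt 3 / 2) :
    Jt (Real.sqrt 3 / 2) < Jt v := by
  rw [Jt_sqrt_three_div_two]
  rcases lt_or_ge v 0 with hneg | hnonneg
  · linarith [half_le_Jt_of_neg hneg]
  · have hsq : v ^ 2 ≠ 3 / 4 := by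
      rwa [← sq_sqrt_three_div_two, Ne, pow_left_inj₀ hnonneg (by positivity) two_ne_zero]
    have : 0 < (v ^ 2 - 3 / 4) ^ 2 := sq_pos_of_ne_zero (sub_ne_zero.mpr hsq)
    rw [Jt_of_nonneg hnonneg]
    linarith

theorem transformed_unique_global_min :
    (∀ v : ℝ, Jt (Real.sqrt 3 / 2) ≤ Jt v) ∧
    (∀ v : ℝ, v ≠ Real.sqrt 3 / 2 → Jt (Real.sqrt 3 / 2) < Jt v) := by
  refine ⟨fun v => ?_, fun v => Jt_sqrt_three_div_two_lt⟩
  rcases eq_or_ne v (Real.sqrt 3 / 2) with rfl | hv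
  · exact le_rfl
  · exact (Jt_sqrt_three_div_two_lt hv).le
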